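/- For r1, r2 ≤ −1 with 1/r2 ≤ 1/r1, fixed z ∈ (0, 1/2] and x > 1, the function g(x) = ∫_{(1−z)/x}^{(x−z)/x} (1−y)^{1/r1 − 1} y^{1/r2 − 1} (y − 1 + z) dy satisfies g(x) ≤ 0 for all x ≥ 1. -/

import Mathlib

open MeasureTheory ProbabilityTheory Real Finset

noncomputable section

variable {Ω : Type*} [MeasurableSpace Ω]

/-- `X ~ Pareto(α)` : cdf `1 - x^(-α)` for `x ≥ 1`. -/
def IsPareto (P : Measure Ω) (α : ℝ) (X : Ω → ℝ) : Prop :=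
  Measurable X ∧ (∀ x : ℝ, 1 ≤ x → P {ω | x < X ω} = ENNReal.ofReal (x ^ (-α))) ∧
    P {ω | X ω < 1} = 0

/-- the increasing rearrangement of a vector -/
def sortedVec {n : ℕ} (f : Fin n → ℝ) : Fin n → ℝ := f ∘ Tuple.sort f

/-- `MajorizedBy θ η` : `θ ⪯ η`, i.e. equal sums and the sum of the `k` smallest
components of `θ` is at least that of `η` for each `k`. -/
def MajorizedBy {n : ℕ} (θ η : Fin n → ℝ) : Prop :=
  (∑ i, θ i = ∑ i, η i) ∧
  ∀ k : ℕ, k ≤ n →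
    ∑ i ∈ Finset.univ.filter (fun i : Fin n => (i : ℕ) < k), sortedVec η i ≤
    ∑ i ∈ Finset.univ.filter (fun i : Fin n => (i : ℕ) < k), sortedVec θ i

/-!
With `p = 1/r₁ - 1`, `q = 1/r₂ - 1` and `F(y) = (1 - y)^p y^q (y - 1 + z)`, write
`g(x) = ∫_{a(x)}^{b(x)} F` where `a(x) = (1 - z)/x` and `b(x) = (x - z)/x`. Both limits equal `1 - z`
at `x = 1`, so `g(1) = 0`, and it suffices that `g' ≤ 0` on `[1, ∞)`. By the Leibniz rule
`g'(x) = b'(x) F(b(x)) - a'(x) F(a(x))`, and after removing the factor `(x - 1)/x^(p+q+3) ≥ 0`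
the sign condition reads `z^(p+2) (x - z)^q ≤ (x - 1 + z)^p (1 - z)^(q+2)`. Splitting
`z^(p+2) = z^(p-q) z^(q+2)`, this is the product of `z^(p-q) ≤ (x-1+z)^(p-q)`,
`z^(q+2) ≤ (1-z)^(q+2)` and `(x-z)^q ≤ (x-1+z)^q`.
-/

theorem hasDerivAt_intervalIntegral_comp {E : Type*} [NormedAddCommGroup E] [NormedSpace ℝ E]
    [CompleteSpace E] {f : ℝ → E} {s : Set ℝ} {a b : ℝ → ℝ} {a' b' x : ℝ}
    (hs : IsOpen s) (hf : ContinuousOn f s) (ha : HasDerivAt a a' x) (hb : HasDerivAt b b' x)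
    (hab : Set.uIcc (a x) (b x) ⊆ s) :
    HasDerivAt (fun w => ∫ y in a w..b w, f y) (b' • f (b x) - a' • f (a x)) x := by
  have hax : a x ∈ s := hab Set.left_mem_uIcc
  have hbx : b x ∈ s := hab Set.right_mem_uIcc
  have hF := intervalIntegral.integral_hasFDerivAt (hf.mono hab).intervalIntegrable
    (hf.stronglyMeasurableAtFilter hs _ hax) (hf.stronglyMeasurableAtFilter hs _ hbx)
    (hf.continuousAt (hs.mem_nhds hax)) (hf.continuousAt (hs.mem_nhds hbx))
  exact hF.comp_hasDerivAt x (ha.prodMk hb)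

theorem rpow_mul_add_rpow_mul_sq_le {p q a b s : ℝ} (hq : q ≤ 0) (hq2 : 0 ≤ q + 2)
    (hpq : q ≤ p) (ha : 0 < a) (hab : a ≤ b) (hs : 0 ≤ s) :
    a ^ p * (s + b) ^ q * a ^ 2 ≤ (s + a) ^ p * b ^ q * b ^ 2 := by
  have hb : 0 < b := ha.trans_le hab
  have hsa : 0 < s + a := by linarith
  have hsq : ∀ {c : ℝ}, 0 < c → c ^ 2 = c ^ (2 : ℝ) := fun _ => (rpow_natCast _ 2).symm
  calc a ^ p * (s + b) ^ q * a ^ 2 = a ^ (p - q) * a ^ (q + 2) * (s + b) ^ q := by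
        rw [hsq ha, mul_right_comm, ← rpow_add ha, ← rpow_add ha]; ring_nf
    _ ≤ (s + a) ^ (p - q) * b ^ (q + 2) * (s + a) ^ q := by
        have h₁ : a ^ (p - q) ≤ (s + a) ^ (p - q) :=
          rpow_le_rpow ha.le (by linarith) (by linarith)
        have h₂ : a ^ (q + 2) ≤ b ^ (q + 2) := rpow_le_rpow ha.le hab hq2
        have h₃ : (s + b) ^ q ≤ (s + a) ^ q := rpow_le_rpow_of_nonpos hsa (by linarith) hq
        gcongr
    _ = (s + a) ^ p * b ^ q * b ^ 2 := by
        rw [hsq hb, mul_right_comm, ← rpow_add hsa, mul_assoc, ← rpow_add hb]; ring_nf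

def paretoIntegrand (p q z y : ℝ) : ℝ := (1 - y) ^ p * y ^ q * (y - 1 + z)

def paretoGap (p q z x : ℝ) : ℝ :=
  ∫ y in (1 - z) / x..(x - z) / x, paretoIntegrand p q z y

def paretoGapDeriv (p q z x : ℝ) : ℝ :=
  z / x ^ 2 * paretoIntegrand p q z ((x - z) / x)
    + (1 - z) / x ^ 2 * paretoIntegrand p q z ((1 - z) / x)

theorem continuousOn_paretoIntegrand (p q z : ℝ) :
    ContinuousOn (paretoIntegrand p q z) (Set.Ioo 0 1) := by
  intro y hy
  have h1 : 1 - y ≠ 0 := by linarith [hy.2]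
  have h2 : y ≠ 0 := hy.1.ne'
  unfold paretoIntegrand
  apply ContinuousAt.continuousWithinAt
  fun_prop (disch := simp [h1, h2])

theorem paretoGap_one (p q z : ℝ) : paretoGap p q z 1 = 0 := by
  simp [paretoGap]

theorem hasDerivAt_paretoGap (p q : ℝ) {z x : ℝ} (hz : 0 < z) (hz1 : z < 1) (hx : 1 ≤ x) :
    HasDerivAt (paretoGap p q z) (paretoGapDeriv p q z x) x := by
  have hx0 : 0 < x := by linarith
  have ha : HasDerivAt (fun w => (1 - z) / w) (-((1 - z) / x ^ 2)) x := by
    refine ((hasDerivAt_const x (1 - z)).fun_div (hasDerivAt_id' x) hx0.ne').congr_deriv ?_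
    ring
  have hb : HasDerivAt (fun w => (w - z) / w) (z / x ^ 2) x := by
    refine (((hasDerivAt_id' x).sub_const z).fun_div (hasDerivAt_id' x) hx0.ne').congr_deriv ?_
    ring
  have hmem : Set.uIcc ((1 - z) / x) ((x - z) / x) ⊆ Set.Ioo 0 1 := by
    apply Set.ordConnected_Ioo.uIcc_subset <;> constructor <;>
      first | apply div_pos <;> linarith | rw [div_lt_one hx0]; linarith
  refine (hasDerivAt_intervalIntegral_comp isOpen_Ioo (continuousOn_paretoIntegrand p q z)
    ha hb hmem).congr_deriv ?_
  simp only [paretoGapDeriv, smul_eq_mul]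
  ring

theorem paretoGapDeriv_nonpos {p q z x : ℝ} (hq : q ≤ 0) (hq2 : 0 ≤ q + 2)
    (hpq : q ≤ p) (hz : 0 < z) (hz2 : z ≤ 1 / 2) (hx : 1 ≤ x) :
    paretoGapDeriv p q z x ≤ 0 := by
  have hx0 : 0 < x := by linarith
  have hz1 : 0 < 1 - z := by linarith
  have hxz : 0 < x - 1 + z := by linarith
  have hb : 1 - (x - z) / x = z / x := by field_simp; ring
  have ha : 1 - (1 - z) / x = (x - 1 + z) / x := by field_simp; ring
  have hxz' : x - z = x - 1 + (1 - z) := by ring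
  have key : paretoGapDeriv p q z x =
      (x - 1) / (x ^ p * x ^ q * x ^ 3) *
        (z ^ p * (x - 1 + (1 - z)) ^ q * z ^ 2 - (x - 1 + z) ^ p * (1 - z) ^ q * (1 - z) ^ 2) := by
    simp only [paretoGapDeriv, paretoIntegrand, hb, ha]
    rw [div_rpow hz.le hx0.le, div_rpow (by linarith) hx0.le, div_rpow hxz.le hx0.le,
      div_rpow hz1.le hx0.le, hxz']
    field_simp
    ring
  rw [key]
  refine mul_nonpos_of_nonneg_of_nonpos (div_nonneg (by linarith) (by positivity)) ?_
  exact sub_nonpos.2 (rpow_mul_add_rpow_mul_sq_le hq hq2 hpq hz (by linarith) (by linarith))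

theorem paretoGap_nonpos {p q z x : ℝ} (hq : q ≤ 0) (hq2 : 0 ≤ q + 2)
    (hpq : q ≤ p) (hz : 0 < z) (hz2 : z ≤ 1 / 2) (hx : 1 ≤ x) : paretoGap p q z x ≤ 0 := by
  have hderiv (y : ℝ) (hy : 1 ≤ y) := hasDerivAt_paretoGap p q hz (by linarith) hy
  have hanti : AntitoneOn (paretoGap p q z) (Set.Ici 1) := by
    refine antitoneOn_of_hasDerivWithinAt_nonpos (convex_Ici 1) (f' := paretoGapDeriv p q z)
      (fun y hy => (hderiv y hy).continuousAt.continuousWithinAt) ?_ ?_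
    · intro y hy
      exact (hderiv y (interior_subset hy)).hasDerivWithinAt
    · intro y hy
      exact paretoGapDeriv_nonpos hq hq2 hpq hz hz2 (interior_subset hy)
  simpa [paretoGap_one] using hanti Set.self_mem_Ici hx hx

theorem stmt_4 (r₁ r₂ : ℝ) (hr₂ : r₂ ≤ -1) (h₁₂ : 1 / r₂ ≤ 1 / r₁)
    (z : ℝ) (hz : z ∈ Set.Ioc 0 (1 / 2 : ℝ)) :
    ∀ x : ℝ, 1 ≤ x →
      (∫ y in ((1 - z) / x)..((x - z) / x),
        (1 - y) ^ (1 / r₁ - 1) * y ^ (1 / r₂ - 1) * (y - 1 + z)) ≤ 0 := by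
  intro x hx
  have hr₂_neg : 1 / r₂ < 0 := one_div_neg.mpr (by linarith)
  have hr₂_ge : -1 ≤ 1 / r₂ := (le_div_iff_of_neg (by linarith)).mpr (by linarith)
  exact paretoGap_nonpos (by linarith) (by linarith) (by linarith) hz.1 hz.2 hx
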